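/- arXiv:2603.03216 — 3 statements merged into one kernel-verified Lean document; each statement's English description precedes it below -/
import Mathlib

section
/- Every automorphism of the algebra B(H) of bounded operators on a separable Hilbert space H is of the form x ↦ R x R⁻¹ for some invertible bounded operator R on H. -/
/-!
For an algebra isomorphism `φ`, the image of a nonzero rank-one operator `v.smulRight u` is
nonzero, so for a suitable `z` the map `R ξ = φ (v.smulRight ξ) z` is a nonzero linear map
satisfying `R (T ξ) = φ T (R ξ)`. Since operators act transitively on nonzero vectors, such an
intertwiner is injective, and, `φ` being surjective, surjective. Its graph is closed: applying
`φ (g.smulRight e)` with `R e ≠ 0` turns a limit of values of `R` into a limit of the scalars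
`g (u n)`. By the closed graph theorem `R` is a continuous linear equivalence, and
`φ T = R T R⁻¹`.
-/

section

open Filter Topology ContinuousLinearMap

variable {𝕜 E F : Type*} [NontriviallyNormedField 𝕜] [NormedAddCommGroup E] [NormedSpace 𝕜 E]
  [NormedAddCommGroup F] [NormedSpace 𝕜 F]

theorem SeparatingDual.exists_continuousLinearMap_apply_eq [SeparatingDual 𝕜 E] {ξ : E}
    (hξ : ξ ≠ 0) (η : F) : ∃ T : E →L[𝕜] F, T ξ = η := by
  obtain ⟨g, hg⟩ := SeparatingDual.exists_eq_one (R := 𝕜) hξ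
  exact ⟨g.smulRight η, by simp [hg]⟩

section Intertwiner

variable {φ : (E →L[𝕜] E) → (F →L[𝕜] F)} {R : E →ₗ[𝕜] F}

theorem injective_of_intertwines [SeparatingDual 𝕜 E] (hR : ∀ T ξ, R (T ξ) = φ T (R ξ))
    (hR0 : R ≠ 0) : Function.Injective R := by
  refine (injective_iff_map_eq_zero R).mpr fun ξ hξ => ?_
  by_contra hξ0
  refine hR0 (LinearMap.ext fun η => ?_)
  obtain ⟨T, rfl⟩ := SeparatingDual.exists_continuousLinearMap_apply_eq (𝕜 := 𝕜) hξ0 η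
  rw [hR, hξ, map_zero, LinearMap.zero_apply]

theorem surjective_of_intertwines [SeparatingDual 𝕜 F] (hφ : Function.Surjective φ)
    (hR : ∀ T ξ, R (T ξ) = φ T (R ξ)) (hR0 : R ≠ 0) : Function.Surjective R := by
  obtain ⟨e, he⟩ := DFunLike.ne_iff.mp hR0
  intro η
  obtain ⟨S, hS⟩ := SeparatingDual.exists_continuousLinearMap_apply_eq (𝕜 := 𝕜) he η
  obtain ⟨T, rfl⟩ := hφ S
  exact ⟨T e, by rw [hR, hS]⟩

theorem continuous_of_intertwines [CompleteSpace E] [CompleteSpace F] [SeparatingDual 𝕜 E]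
    (hR : ∀ T ξ, R (T ξ) = φ T (R ξ)) (hRsurj : Function.Surjective R) (hR0 : R ≠ 0) :
    Continuous R := by
  obtain ⟨e, he⟩ := DFunLike.ne_iff.mp hR0
  refine R.continuous_of_seq_closed_graph fun u x y hux huy => ?_
  obtain ⟨ξ, hξ⟩ := hRsurj (y - R x)
  suffices ξ = 0 by rwa [this, map_zero, eq_comm, sub_eq_zero] at hξ
  refine SeparatingDual.eq_zero_of_forall_dual_eq_zero (R := 𝕜) fun g => ?_
  have hrank : ∀ ζ, φ (g.smulRight e) (R ζ) = g ζ • R e := fun ζ => by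
    rw [← hR, smulRight_apply, map_smul]
  have hlim : Tendsto (fun n => φ (g.smulRight e) (R (u n))) atTop (𝓝 (g x • R e)) := by
    simp only [hrank]
    exact ((g.continuous.tendsto x).comp hux).smul_const _
  have hy : φ (g.smulRight e) y = g x • R e :=
    tendsto_nhds_unique (((φ _).continuous.tendsto y).comp huy) hlim
  have : g ξ • R e = 0 := by rw [← hrank, hξ, map_sub, hy, hrank, sub_self]
  exact (smul_eq_zero.mp this).resolve_right he

theorem exists_continuousLinearEquiv_of_intertwines [CompleteSpace E] [CompleteSpace F]
    [SeparatingDual 𝕜 E] [SeparatingDual 𝕜 F] (hφ : Function.Surjective φ)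
    (hR : ∀ T ξ, R (T ξ) = φ T (R ξ)) (hR0 : R ≠ 0) :
    ∃ U : E ≃L[𝕜] F, ∀ T, φ T = U ∘L T ∘L U.symm := by
  have hRsurj := surjective_of_intertwines hφ hR hR0
  let U := (LinearEquiv.ofBijective R ⟨injective_of_intertwines hR hR0, hRsurj⟩)
    |>.toContinuousLinearEquivOfContinuous (continuous_of_intertwines hR hRsurj hR0)
  refine ⟨U, fun T => ContinuousLinearMap.ext fun η => ?_⟩
  obtain ⟨ξ, rfl⟩ := U.surjective η
  simp only [ContinuousLinearMap.comp_apply, ContinuousLinearEquiv.coe_coe,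
    ContinuousLinearEquiv.symm_apply_apply]
  exact (hR T ξ).symm

end Intertwiner

theorem AlgEquiv.exists_intertwiner [SeparatingDual 𝕜 E] [Nontrivial E]
    (φ : (E →L[𝕜] E) ≃ₐ[𝕜] (F →L[𝕜] F)) :
    ∃ R : E →ₗ[𝕜] F, R ≠ 0 ∧ ∀ T ξ, R (T ξ) = φ T (R ξ) := by
  obtain ⟨u, hu⟩ := exists_ne (0 : E)
  obtain ⟨v, hvu⟩ := SeparatingDual.exists_ne_zero (R := 𝕜) hu
  have hφ0 : φ (v.smulRight u) ≠ 0 := by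
    rw [map_ne_zero_iff _ φ.injective]
    exact DFunLike.ne_iff.mpr ⟨u, by simpa using ⟨hvu, hu⟩⟩
  obtain ⟨z, hz⟩ := DFunLike.ne_iff.mp hφ0
  let R : E →ₗ[𝕜] F :=
    (apply 𝕜 F z).toLinearMap ∘ₗ φ.toLinearMap ∘ₗ (smulRightL 𝕜 E E v).toLinearMap
  have hRapply : ∀ ξ, R ξ = φ (v.smulRight ξ) z := fun _ => rfl
  refine ⟨R, fun h => hz ?_, fun T ξ => ?_⟩
  · simpa [hRapply] using LinearMap.congr_fun h u
  · have : v.smulRight (T ξ) = T * v.smulRight ξ := by ext; simp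
    rw [hRapply, hRapply, this, map_mul, mul_apply_eq_comp]

theorem AlgEquiv.exists_continuousLinearEquiv_conj [CompleteSpace E] [CompleteSpace F]
    [SeparatingDual 𝕜 E] [SeparatingDual 𝕜 F] [Nontrivial E]
    (φ : (E →L[𝕜] E) ≃ₐ[𝕜] (F →L[𝕜] F)) :
    ∃ U : E ≃L[𝕜] F, ∀ T, φ T = U ∘L T ∘L U.symm := by
  obtain ⟨R, hR0, hR⟩ := φ.exists_intertwiner
  exact exists_continuousLinearEquiv_of_intertwines φ.surjective hR hR0

end

theorem stmt_0_general {H : Type*} [NormedAddCommGroup H] [InnerProductSpace ℂ H]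
    [CompleteSpace H]
    (φ : (H →L[ℂ] H) ≃ₐ[ℂ] (H →L[ℂ] H)) :
    ∃ R : (H →L[ℂ] H)ˣ, ∀ x : H →L[ℂ] H, φ x = ↑R * x * ↑R⁻¹ := by
  rcases subsingleton_or_nontrivial H with _ | _
  · exact ⟨1, fun x => Subsingleton.elim _ _⟩
  obtain ⟨U, hU⟩ := φ.exists_continuousLinearEquiv_conj
  exact ⟨U.toUnit, hU⟩

/-- Every algebra automorphism of B(H), H a separable complex Hilbert space,
is implemented by conjugation with an invertible bounded operator. -/
theorem stmt_0 {H : Type*} [NormedAddCommGroup H] [InnerProductSpace ℂ H]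
    [CompleteSpace H] [TopologicalSpace.SeparableSpace H]
    (φ : (H →L[ℂ] H) ≃ₐ[ℂ] (H →L[ℂ] H)) :
    ∃ R : (H →L[ℂ] H)ˣ, ∀ x : H →L[ℂ] H, φ x = ↑R * x * ↑R⁻¹ :=
  stmt_0_general φ
end

section
/- Let π be a faithful involutive representation of a *-algebra A on a Hilbert space H, ρ an automorphism of A, and R an invertible bounded operator with π(ρ(a)) = R π(a) R⁻¹ for all a ∈ A. If ρ satisfies the unitarity condition ρ(a*) = (ρ⁻¹(a))*, then R⁻¹R† commutes with π(a) for every a ∈ A. -/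
/-- If ρ implemented by invertible R satisfies the unitarity condition
ρ(a*) = (ρ⁻¹(a))*, then R⁻¹R† commutes with π(a) for every a. -/
theorem stmt_4 {H : Type*} [NormedAddCommGroup H] [InnerProductSpace ℂ H]
    [CompleteSpace H] {A : Type*} [Ring A] [Algebra ℂ A] [StarRing A]
    (π : A →ₐ[ℂ] (H →L[ℂ] H)) (hinj : Function.Injective π)
    (hstar : ∀ a : A, π (star a) = ContinuousLinearMap.adjoint (π a))
    (ρ : A ≃ₐ[ℂ] A) (R : (H →L[ℂ] H)ˣ)
    (himp : ∀ a : A, π (ρ a) = ↑R * π a * ↑R⁻¹)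
    (hunit : ∀ a : A, ρ (star a) = star (ρ.symm a)) :
    ∀ a : A, Commute ((↑R⁻¹ : H →L[ℂ] H) * ContinuousLinearMap.adjoint (↑R : H →L[ℂ] H)) (π a) := by
  have hadj_mul : ∀ X Y : H →L[ℂ] H, ContinuousLinearMap.adjoint (X * Y) =
      ContinuousLinearMap.adjoint Y * ContinuousLinearMap.adjoint X := fun X Y =>
    ContinuousLinearMap.adjoint_comp X Y
  have hRR : (↑R : H →L[ℂ] H) * ↑R⁻¹ = 1 := by
    rw [← Units.val_mul, mul_inv_cancel]; rfl
  have hR1 : (↑R⁻¹ : H →L[ℂ] H) * ↑R = 1 := by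
    rw [← Units.val_mul, inv_mul_cancel]; rfl
  have hRinvR : ContinuousLinearMap.adjoint (↑R⁻¹ : H →L[ℂ] H) *
      ContinuousLinearMap.adjoint (↑R : H →L[ℂ] H) = 1 := by
    rw [← hadj_mul, hRR]
    show ContinuousLinearMap.adjoint (ContinuousLinearMap.id ℂ H) = ContinuousLinearMap.id ℂ H
    exact ContinuousLinearMap.adjoint_id
  have key : ∀ c : A, (↑R : H →L[ℂ] H) * π c * ↑R⁻¹ =
      ContinuousLinearMap.adjoint (↑R : H →L[ℂ] H) * π c *
        ContinuousLinearMap.adjoint (↑R⁻¹ : H →L[ℂ] H) := by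
    have hgen : ∀ d : A, (↑R : H →L[ℂ] H) * ContinuousLinearMap.adjoint (π d) * ↑R⁻¹ =
        ContinuousLinearMap.adjoint (↑R : H →L[ℂ] H) * ContinuousLinearMap.adjoint (π d) *
          ContinuousLinearMap.adjoint (↑R⁻¹ : H →L[ℂ] H) := by
      intro d
      have h1 : π (ρ (star d)) = ↑R * ContinuousLinearMap.adjoint (π d) * ↑R⁻¹ := by
        rw [himp, hstar]
      have hsymm : π (ρ.symm d) = ↑R⁻¹ * π d * ↑R := by
        have h := himp (ρ.symm d)
        rw [ρ.apply_symm_apply] at h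
        calc π (ρ.symm d) = (↑R⁻¹ * ↑R) * π (ρ.symm d) * (↑R⁻¹ * ↑R) := by
              rw [hR1]; noncomm_ring
          _ = ↑R⁻¹ * (↑R * π (ρ.symm d) * ↑R⁻¹) * ↑R := by noncomm_ring
          _ = ↑R⁻¹ * π d * ↑R := by rw [← h]
      have h2 : π (ρ (star d)) = ContinuousLinearMap.adjoint (↑R : H →L[ℂ] H) *
          ContinuousLinearMap.adjoint (π d) * ContinuousLinearMap.adjoint (↑R⁻¹ : H →L[ℂ] H) := by
        rw [hunit, hstar, hsymm, hadj_mul, hadj_mul]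
        noncomm_ring
      exact h1.symm.trans h2
    intro c
    have := hgen (star c)
    rwa [hstar, ContinuousLinearMap.adjoint_adjoint] at this
  intro a
  have hk := key a
  show (↑R⁻¹ : H →L[ℂ] H) * ContinuousLinearMap.adjoint (↑R : H →L[ℂ] H) * π a =
      π a * ((↑R⁻¹ : H →L[ℂ] H) * ContinuousLinearMap.adjoint (↑R : H →L[ℂ] H))
  calc (↑R⁻¹ : H →L[ℂ] H) * ContinuousLinearMap.adjoint (↑R : H →L[ℂ] H) * π a
      = ↑R⁻¹ * ContinuousLinearMap.adjoint (↑R : H →L[ℂ] H) * π a *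
        (ContinuousLinearMap.adjoint (↑R⁻¹ : H →L[ℂ] H) *
          ContinuousLinearMap.adjoint (↑R : H →L[ℂ] H)) := by rw [hRinvR, mul_one]
    _ = ↑R⁻¹ * (ContinuousLinearMap.adjoint (↑R : H →L[ℂ] H) * π a *
          ContinuousLinearMap.adjoint (↑R⁻¹ : H →L[ℂ] H)) *
          ContinuousLinearMap.adjoint (↑R : H →L[ℂ] H) := by noncomm_ring
    _ = ↑R⁻¹ * (↑R * π a * ↑R⁻¹) * ContinuousLinearMap.adjoint (↑R : H →L[ℂ] H) := by
        rw [← hk]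
    _ = (↑R⁻¹ * ↑R) * π a * (↑R⁻¹ * ContinuousLinearMap.adjoint (↑R : H →L[ℂ] H)) := by
        noncomm_ring
    _ = π a * ((↑R⁻¹ : H →L[ℂ] H) * ContinuousLinearMap.adjoint (↑R : H →L[ℂ] H)) := by
        rw [hR1, one_mul]
end

section
/- Consider A = ℂ ⊕ M₂(ℂ) acting on H = ℂ¹⁰ via π(c,m) = diag(m, c, c, c, m, m, c) (blocks in that order) and the involution T = diag(I₂, 1, 1, 1, −I₂, −I₂, −1). Then the eigenspaces H₊, H₋ of T both have dimension 5 and the restricted representations π₊, π₋ are both faithful, but there is no invertible operator S : H₋ → H₊ conjugating π₋ into π₊; indeed Tr(π₊(c,m)) = Tr(m) + 3c ≠ 2Tr(m) + c = Tr(π₋(c,m)) for some (c,m). -/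
open Matrix

/-- Embedding of `Fin 2` from a natural number (used to address matrix blocks). -/
def f2 (n : ℕ) : Fin 2 := ⟨n % 2, Nat.mod_lt _ (by norm_num)⟩

/-- The representation π(c,m) = diag(m, c, c, c, m, m, c) of ℂ ⊕ M₂(ℂ) on ℂ¹⁰. -/
def pi10 (c : ℂ) (m : Matrix (Fin 2) (Fin 2) ℂ) : Matrix (Fin 10) (Fin 10) ℂ :=
  Matrix.of fun i j =>
    if i.val < 2 ∧ j.val < 2 then m (f2 i.val) (f2 j.val)
    else if i = j ∧ 2 ≤ i.val ∧ i.val < 5 then c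
    else if 5 ≤ i.val ∧ i.val < 7 ∧ 5 ≤ j.val ∧ j.val < 7 then m (f2 (i.val - 5)) (f2 (j.val - 5))
    else if 7 ≤ i.val ∧ i.val < 9 ∧ 7 ≤ j.val ∧ j.val < 9 then m (f2 (i.val - 7)) (f2 (j.val - 7))
    else if i = j ∧ i.val = 9 then c
    else 0

/-- The twisting involution T = diag(I₂, 1, 1, 1, −I₂, −I₂, −1) on ℂ¹⁰. -/
def T10 : Matrix (Fin 10) (Fin 10) ℂ :=
  Matrix.diagonal fun i => if i.val < 5 then (1:ℂ) else -1

/-- Embedding of the +1 eigenspace coordinates. -/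
def eplus (i : Fin 5) : Fin 10 := ⟨i.val, by omega⟩

/-- Embedding of the −1 eigenspace coordinates. -/
def eminus (i : Fin 5) : Fin 10 := ⟨i.val + 5, by omega⟩

/-! After reordering coordinates, π₊(c, m) = m ⊕ c·I₃ and π₋(c, m) = m ⊕ m ⊕ c as block diagonal
matrices. Both representations are faithful because m and c can be read off the blocks, while their
traces Tr m + 3c and 2 Tr m + c differ at (c, m) = (1, 0); since conjugation preserves the trace,
no invertible S intertwines them. -/

namespace Matrix

variable {R n o : Type*}

theorem trace_fromBlocks [Fintype n] [Fintype o] [AddCommMonoid R] (A : Matrix n n R)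
    (B : Matrix n o R) (C : Matrix o n R) (D : Matrix o o R) :
    trace (fromBlocks A B C D) = trace A + trace D := by
  simp [trace, Fintype.sum_sum_type]

theorem trace_reindex [Fintype n] [Fintype o] [AddCommMonoid R] (e : n ≃ o) (A : Matrix n n R) :
    trace (reindex e e A) = trace A := by
  simpa [trace] using e.symm.sum_comp fun i => A i i

theorem fromBlocks_smul_one_injective [MulZeroOneClass R] [DecidableEq o] [Nonempty o] :
    Function.Injective fun p : R × Matrix n n R => fromBlocks p.2 0 0 (p.1 • (1 : Matrix o o R)) := by
  rintro ⟨c, A⟩ ⟨c', A'⟩ h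
  obtain ⟨hA, -, -, hc⟩ := fromBlocks_inj.1 h
  obtain ⟨i⟩ := ‹Nonempty o›
  exact Prod.ext (by simpa using congrFun₂ hc i i) hA

section Diagonal

variable {K : Type*} [Field K] [DecidableEq K] [Fintype n] [DecidableEq n]

theorem finrank_ker_toLin'_diagonal (w : n → K) :
    Module.finrank K (LinearMap.ker (toLin' (diagonal w))) = Fintype.card {i // w i = 0} := by
  have hrange : Module.finrank K (LinearMap.range (toLin' (diagonal w))) =
      Fintype.card {i // w i ≠ 0} :=
    Module.finrank_eq_of_rank_eq (LinearMap.rank_diagonal w)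
  have hsum := (toLin' (diagonal w)).finrank_range_add_finrank_ker
  rw [hrange, Module.finrank_fintype_fun_eq_card, Fintype.card_subtype_compl] at hsum
  have := Fintype.card_subtype_le fun i => w i = 0
  omega

theorem finrank_ker_toLin'_diagonal_sub_one (d : n → K) :
    Module.finrank K (LinearMap.ker (toLin' (diagonal d) - 1)) = Fintype.card {i // d i = 1} := by
  rw [Module.End.one_eq_id, ← toLin'_one, ← map_sub, ← diagonal_one, diagonal_sub,
    finrank_ker_toLin'_diagonal]
  exact Fintype.card_congr (Equiv.subtypeEquivRight fun _ => sub_eq_zero)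

theorem finrank_ker_toLin'_diagonal_add_one (d : n → K) :
    Module.finrank K (LinearMap.ker (toLin' (diagonal d) + 1)) = Fintype.card {i // d i = -1} := by
  rw [Module.End.one_eq_id, ← toLin'_one, ← map_add, ← diagonal_one, diagonal_add,
    finrank_ker_toLin'_diagonal]
  exact Fintype.card_congr (Equiv.subtypeEquivRight fun _ => add_eq_zero_iff_eq_neg)

end Diagonal

end Matrix

def finSumFinSumFinEquiv {a b c : ℕ} : Fin a ⊕ (Fin b ⊕ Fin c) ≃ Fin (a + (b + c)) :=
  (Equiv.sumCongr (Equiv.refl _) finSumFinEquiv).trans finSumFinEquiv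

theorem finrank_ker_T10_sub_one : Module.finrank ℂ (LinearMap.ker (toLin' T10 - 1)) = 5 := by
  rw [T10, finrank_ker_toLin'_diagonal_sub_one]
  have hsign (i : Fin 10) : (if i.val < 5 then (1 : ℂ) else -1) = 1 ↔ i.val < 5 := by
    split_ifs <;> norm_num [*]
  rw [Fintype.card_congr (Equiv.subtypeEquivRight hsign)]
  rfl

theorem finrank_ker_T10_add_one : Module.finrank ℂ (LinearMap.ker (toLin' T10 + 1)) = 5 := by
  rw [T10, finrank_ker_toLin'_diagonal_add_one]
  have hsign (i : Fin 10) : (if i.val < 5 then (1 : ℂ) else -1) = -1 ↔ ¬ i.val < 5 := by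
    split_ifs <;> norm_num [*]
  rw [Fintype.card_congr (Equiv.subtypeEquivRight hsign)]
  rfl

theorem pi10_submatrix_eplus (c : ℂ) (m : Matrix (Fin 2) (Fin 2) ℂ) :
    (pi10 c m).submatrix eplus eplus =
      reindex finSumFinEquiv finSumFinEquiv (fromBlocks m 0 0 (c • (1 : Matrix (Fin 3) (Fin 3) ℂ))) := by
  rw [← Equiv.symm_apply_eq, reindex_symm]
  ext (i | i) (j | j) <;> fin_cases i <;> fin_cases j <;> simp +decide [pi10, eplus, f2] <;> rfl

theorem pi10_submatrix_eminus (c : ℂ) (m : Matrix (Fin 2) (Fin 2) ℂ) :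
    (pi10 c m).submatrix eminus eminus =
      reindex finSumFinSumFinEquiv finSumFinSumFinEquiv
        (fromBlocks m 0 0 (fromBlocks m 0 0 (c • (1 : Matrix (Fin 1) (Fin 1) ℂ)))) := by
  rw [← Equiv.symm_apply_eq, reindex_symm]
  ext (i | i | i) (j | j | j) <;> fin_cases i <;> fin_cases j <;>
    simp +decide [pi10, eminus, f2, finSumFinSumFinEquiv] <;> rfl

theorem trace_pi10_submatrix_eplus (c : ℂ) (m : Matrix (Fin 2) (Fin 2) ℂ) :
    ((pi10 c m).submatrix eplus eplus).trace = m.trace + 3 * c := by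
  rw [pi10_submatrix_eplus, trace_reindex, trace_fromBlocks, trace_smul, trace_one,
    Fintype.card_fin, smul_eq_mul, Nat.cast_ofNat, mul_comm]

theorem trace_pi10_submatrix_eminus (c : ℂ) (m : Matrix (Fin 2) (Fin 2) ℂ) :
    ((pi10 c m).submatrix eminus eminus).trace = 2 * m.trace + c := by
  rw [pi10_submatrix_eminus, trace_reindex, trace_fromBlocks, trace_fromBlocks, trace_smul,
    trace_one, Fintype.card_fin, Nat.cast_one, smul_eq_mul, mul_one]
  ring

theorem injective_pi10_submatrix_eplus :
    Function.Injective fun p : ℂ × Matrix (Fin 2) (Fin 2) ℂ =>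
      (pi10 p.1 p.2).submatrix eplus eplus := by
  simp only [pi10_submatrix_eplus]
  exact (reindex _ _).injective.comp fromBlocks_smul_one_injective

theorem injective_pi10_submatrix_eminus :
    Function.Injective fun p : ℂ × Matrix (Fin 2) (Fin 2) ℂ =>
      (pi10 p.1 p.2).submatrix eminus eminus := by
  simp only [pi10_submatrix_eminus]
  refine (reindex _ _).injective.comp fun p q h => fromBlocks_smul_one_injective (o := Fin 1) ?_
  exact (fromBlocks_inj.1 h).2.2.2

/-- For A = ℂ ⊕ M₂(ℂ) acting on ℂ¹⁰ as diag(m,c,c,c,m,m,c) with involution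
T = diag(I₂,1,1,1,−I₂,−I₂,−1): both eigenspaces of T have dimension 5, the two
restricted representations π± are faithful, their traces are Tr m + 3c and
2 Tr m + c which differ for some (c,m), and consequently there is no invertible
S conjugating π₋ into π₊. -/
theorem stmt_13 :
    Module.finrank ℂ (LinearMap.ker (Matrix.toLin' T10 - 1)) = 5 ∧
    Module.finrank ℂ (LinearMap.ker (Matrix.toLin' T10 + 1)) = 5 ∧
    Function.Injective (fun p : ℂ × Matrix (Fin 2) (Fin 2) ℂ =>
      (pi10 p.1 p.2).submatrix eplus eplus) ∧
    Function.Injective (fun p : ℂ × Matrix (Fin 2) (Fin 2) ℂ =>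
      (pi10 p.1 p.2).submatrix eminus eminus) ∧
    (∀ (c : ℂ) (m : Matrix (Fin 2) (Fin 2) ℂ),
      ((pi10 c m).submatrix eplus eplus).trace = m.trace + 3 * c ∧
      ((pi10 c m).submatrix eminus eminus).trace = 2 * m.trace + c) ∧
    (∃ (c : ℂ) (m : Matrix (Fin 2) (Fin 2) ℂ),
      ((pi10 c m).submatrix eplus eplus).trace ≠ ((pi10 c m).submatrix eminus eminus).trace) ∧
    ¬ ∃ S : Matrix (Fin 5) (Fin 5) ℂ, IsUnit S ∧
      ∀ (c : ℂ) (m : Matrix (Fin 2) (Fin 2) ℂ),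
        (pi10 c m).submatrix eplus eplus = S * (pi10 c m).submatrix eminus eminus * S⁻¹ := by
  have htrace_ne : ((pi10 1 0).submatrix eplus eplus).trace ≠
      ((pi10 1 0).submatrix eminus eminus).trace := by
    rw [trace_pi10_submatrix_eplus, trace_pi10_submatrix_eminus]
    norm_num
  refine ⟨finrank_ker_T10_sub_one, finrank_ker_T10_add_one, injective_pi10_submatrix_eplus,
    injective_pi10_submatrix_eminus,
    fun c m => ⟨trace_pi10_submatrix_eplus c m, trace_pi10_submatrix_eminus c m⟩,
    ⟨1, 0, htrace_ne⟩, ?_⟩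
  rintro ⟨S, hS, hconj⟩
  exact htrace_ne (by rw [hconj, trace_conj hS])
end
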